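/- arXiv:1910.00951 — 9 statements merged into one kernel-verified Lean document; each statement's English description precedes it below -/
import Mathlib

section
/- Let F be the QP mapping with data (λ, A, B) on the open positive orthant of ℝⁿ and let C be an invertible real n×n matrix. Let G be the QP mapping with data (λ', A', B') = (C⁻¹·λ, C⁻¹·A, B·C). Then for every y in the open positive orthant, F(φ_C(y)) = φ_C(G(y)); that is, a quasimonomial transformation of matrix C turns the QP mapping with data (λ, A, B) into the QP mapping with data (C⁻¹·λ, C⁻¹·A, B·C). -/
/-- The QP (quasipolynomial) mapping with data `(lam, A, B)`. -/
noncomputable def QPmap {n m : ℕ} (lam : Fin n → ℝ) (A : Matrix (Fin n) (Fin m) ℝ)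
    (B : Matrix (Fin m) (Fin n) ℝ) (x : Fin n → ℝ) : Fin n → ℝ :=
  fun i => x i * Real.exp (lam i + ∑ j, A i j * ∏ k, x k ^ B j k)

/-- The quasimonomial transformation of matrix `C`: `φ_C(y)_i = Π_j y_j ^ C_{ij}`. -/
noncomputable def QMtrans {n : ℕ} (C : Matrix (Fin n) (Fin n) ℝ) (y : Fin n → ℝ) :
    Fin n → ℝ :=
  fun i => ∏ j, y j ^ C i j

/-- A quasimonomial transformation of matrix `C` turns the QP mapping with data `(λ, A, B)`
into the QP mapping with data `(C⁻¹·λ, C⁻¹·A, B·C)`: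
for positive `y`, `F(φ_C(y)) = φ_C(G(y))`. -/
theorem qp_map_qm_transform {n m : ℕ} (lam : Fin n → ℝ) (A : Matrix (Fin n) (Fin m) ℝ)
    (B : Matrix (Fin m) (Fin n) ℝ) (C : Matrix (Fin n) (Fin n) ℝ) (hC : IsUnit C.det)
    (y : Fin n → ℝ) (hy : ∀ i, 0 < y i) :
    QPmap lam A B (QMtrans C y) =
      QMtrans C (QPmap (C⁻¹.mulVec lam) (C⁻¹ * A) (B * C) y) := by
  have hCC : C * C⁻¹ = 1 := Matrix.mul_nonsing_inv C hC
  -- key: the monomial part transforms as B ↦ B*C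
  have key : ∀ j : Fin m, (∏ k, (∏ l, y l ^ C k l) ^ B j k) = ∏ l, y l ^ (B * C) j l := by
    intro j
    have : ∀ k : Fin n, (∏ l, y l ^ C k l) ^ B j k = ∏ l, y l ^ (C k l * B j k) := by
      intro k
      rw [← Real.finset_prod_rpow _ _ (fun l _ => Real.rpow_nonneg (hy l).le _)]
      exact Finset.prod_congr rfl fun l _ => (Real.rpow_mul (hy l).le _ _).symm
    simp_rw [this]
    rw [Finset.prod_comm]
    refine Finset.prod_congr rfl fun l _ => ?_
    rw [← Real.rpow_sum_of_pos (hy l)]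
    congr 1
    simp [Matrix.mul_apply, mul_comm]
  funext i
  simp only [QPmap, QMtrans]
  simp_rw [key]
  -- RHS computation
  have hmul : ∀ j : Fin n,
      (y j * Real.exp ((C⁻¹.mulVec lam) j + ∑ p, (C⁻¹ * A) j p * ∏ l, y l ^ (B * C) p l)) ^ C i j
      = y j ^ C i j *
        Real.exp (C i j * ((C⁻¹.mulVec lam) j + ∑ p, (C⁻¹ * A) j p * ∏ l, y l ^ (B * C) p l)) := by
    intro j
    rw [Real.mul_rpow (hy j).le (Real.exp_pos _).le]
    congr 1
    rw [← Real.exp_log (Real.exp_pos _), Real.log_exp, ← Real.exp_mul, mul_comm]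
  simp_rw [hmul, Finset.prod_mul_distrib, ← Real.exp_sum]
  congr 1
  congr 1
  have h1 : ∑ j, C i j * C⁻¹.mulVec lam j = lam i := by
    have h : C.mulVec (C⁻¹.mulVec lam) i = lam i := by
      rw [Matrix.mulVec_mulVec, hCC, Matrix.one_mulVec]
    simpa [Matrix.mulVec, dotProduct] using h
  have h2 : ∀ p : Fin m, ∑ j, C i j * (C⁻¹ * A) j p = A i p := by
    intro p
    have h : (C * (C⁻¹ * A)) i p = A i p := by rw [← Matrix.mul_assoc, hCC, Matrix.one_mul]
    simpa [Matrix.mul_apply] using h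
  symm
  calc ∑ j, C i j * ((C⁻¹.mulVec lam) j + ∑ p, (C⁻¹ * A) j p * ∏ l, y l ^ (B * C) p l)
      = (∑ j, C i j * (C⁻¹.mulVec lam) j)
        + ∑ j, ∑ p, C i j * ((C⁻¹ * A) j p * ∏ l, y l ^ (B * C) p l) := by
        simp [mul_add, Finset.sum_add_distrib, Finset.mul_sum]
    _ = lam i + ∑ p, A i p * ∏ l, y l ^ (B * C) p l := by
        rw [h1, Finset.sum_comm]
        congr 1
        refine Finset.sum_congr rfl fun p _ => ?_
        simp_rw [← mul_assoc]
        rw [← Finset.sum_mul, h2]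
end

section
/- Let F be a QP mapping on the open positive orthant of ℝⁿ with data (λ, A, B) and combined matrix M = (λ | A), and suppose rank(M) = r < n. Then there exist n−r linearly independent vectors c⁽¹⁾, …, c⁽ⁿ⁻ʳ⁾ ∈ ℝⁿ such that for each of them cᵀ·M = 0, and for every c ∈ ℝⁿ with cᵀ·M = 0 (i.e., cᵀ·λ = 0 and cᵀ·A = 0) the quasimonomial function I_c(x) = Π_{k=1}^n x_k^{c_k} is a constant of motion of F: I_c(F(x)) = I_c(x) for every x in the open positive orthant. -/
/-- The combined matrix `M = (λ | A)` of the data of a QP mapping. -/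
noncomputable def combinedM {n m : ℕ} (lam : Fin n → ℝ) (A : Matrix (Fin n) (Fin m) ℝ) :
    Matrix (Fin n) (Fin (m + 1)) ℝ :=
  Matrix.of fun i j => Fin.cases (lam i) (fun j' => A i j') j

/-- If the combined matrix `M = (λ | A)` of a QP mapping has rank `r < n`, then there are
`n - r` linearly independent vectors `c` with `cᵀ·M = 0`, and for every such `c` the
quasimonomial `I_c(x) = Π_k x_k ^ c_k` is a constant of motion of the QP mapping. -/
theorem qm_constants_of_motion {n m r : ℕ} (lam : Fin n → ℝ)
    (A : Matrix (Fin n) (Fin m) ℝ) (B : Matrix (Fin m) (Fin n) ℝ)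
    (hr : (combinedM lam A).rank = r) (hrn : r < n) :
    (∃ c : Fin (n - r) → (Fin n → ℝ), LinearIndependent ℝ c ∧
      ∀ l, Matrix.vecMul (c l) (combinedM lam A) = 0) ∧
    (∀ c : Fin n → ℝ, Matrix.vecMul c (combinedM lam A) = 0 →
      ∀ x : Fin n → ℝ, (∀ i, 0 < x i) →
        (∏ k, QPmap lam A B x k ^ c k) = ∏ k, x k ^ c k) := by
  constructor
  · classical
    set M := combinedM lam A with hMdef
    have hK : Module.finrank ℝ (LinearMap.ker (Matrix.mulVecLin M.transpose)) = n - r := by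
      have h1 := LinearMap.finrank_range_add_finrank_ker (Matrix.mulVecLin M.transpose)
      have h2 : Module.finrank ℝ (LinearMap.range (Matrix.mulVecLin M.transpose)) = r := by
        have ht := Matrix.rank_transpose M
        rw [hr] at ht
        simpa [Matrix.rank] using ht
      rw [h2, Module.finrank_pi] at h1
      simp at h1
      omega
    set K := LinearMap.ker (Matrix.mulVecLin M.transpose) with hKdef
    let b := Module.finBasis ℝ K
    refine ⟨fun l => ((b (Fin.cast hK.symm l)) : Fin n → ℝ), ?_, ?_⟩
    · have li : LinearIndependent ℝ fun l => ((b l : K) : Fin n → ℝ) :=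
        b.linearIndependent.map' K.subtype (Submodule.ker_subtype K)
      exact li.comp _ (Fin.cast_injective _)
    · intro l
      have hmem := (b (Fin.cast hK.symm l)).2
      have h3 : M.transpose.mulVec ((b (Fin.cast hK.symm l)) : Fin n → ℝ) = 0 := hmem
      rwa [Matrix.mulVec_transpose] at h3
  · intro c hc x hx
    have hlam : ∑ i, c i * lam i = 0 := by
      have := congrFun hc 0
      simpa [Matrix.vecMul, dotProduct, combinedM] using this
    have hA : ∀ j, ∑ i, c i * A i j = 0 := by
      intro j
      have := congrFun hc j.succ
      simpa [Matrix.vecMul, dotProduct, combinedM] using this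
    unfold QPmap
    calc ∏ k, (x k * Real.exp (lam k + ∑ j, A k j * ∏ i, x i ^ B j i)) ^ c k
        = ∏ k, (x k ^ c k * Real.exp ((lam k + ∑ j, A k j * ∏ i, x i ^ B j i) * c k)) := by
          refine Finset.prod_congr rfl fun k _ => ?_
          rw [Real.mul_rpow (hx k).le (Real.exp_pos _).le,
              Real.rpow_def_of_pos (Real.exp_pos _), Real.log_exp]
      _ = (∏ k, x k ^ c k) * Real.exp (∑ k, (lam k + ∑ j, A k j * ∏ i, x i ^ B j i) * c k) := by
          rw [Finset.prod_mul_distrib, Real.exp_sum]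
      _ = ∏ k, x k ^ c k := by
          have hsum : ∑ k, (lam k + ∑ j, A k j * ∏ i, x i ^ B j i) * c k = 0 := by
            have h1 : ∑ k, lam k * c k = 0 := by
              rw [← hlam]; exact Finset.sum_congr rfl fun k _ => mul_comm _ _
            have h2 : ∑ k, (∑ j, A k j * (∏ i, x i ^ B j i)) * c k = 0 := by
              simp only [Finset.sum_mul]
              rw [Finset.sum_comm]
              refine Finset.sum_eq_zero fun j _ => ?_
              have h3 : ∑ k, A k j * (∏ i, x i ^ B j i) * c k
                  = (∑ k, c k * A k j) * (∏ i, x i ^ B j i) := by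
                rw [Finset.sum_mul]
                exact Finset.sum_congr rfl fun k _ => by ring
              rw [h3, hA j, zero_mul]
            simp only [add_mul, Finset.sum_add_distrib, h1, h2, add_zero]
          rw [hsum, Real.exp_zero, mul_one]
end

section
/- Let F be a QP mapping on the open positive orthant of ℝⁿ with data (λ, A, B), where m = n and the n×n matrix B is invertible. Define ψ_B on the open positive orthant by ψ_B(x)_j = Π_{k=1}^n x_k^{B_{jk}}. Then ψ_B is a homeomorphism of the open positive orthant onto itself, and ψ_B ∘ F = L ∘ ψ_B, where L is the Lotka–Volterra mapping L_j(z) = z_j · exp((B·λ)_j + Σ_{l=1}^n (B·A)_{jl} · z_l). Hence every QP mapping with m = n and invertible B is topologically conjugate to the Lotka–Volterra mapping whose coefficients are given by the class invariant B·M, where M = (λ | A). -/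
/-- The quasimonomial map `ψ_B(x)_j = Π_k x_k ^ B_{jk}`. -/
noncomputable def QMvec {n m : ℕ} (B : Matrix (Fin m) (Fin n) ℝ) (x : Fin n → ℝ) :
    Fin m → ℝ :=
  fun j => ∏ k, x k ^ B j k

/-- The Lotka–Volterra mapping `L_j(z) = z_j · exp(μ_j + Σ_l N_{jl} z_l)`. -/
noncomputable def LVmap {m : ℕ} (mu : Fin m → ℝ) (N : Matrix (Fin m) (Fin m) ℝ)
    (z : Fin m → ℝ) : Fin m → ℝ :=
  fun j => z j * Real.exp (mu j + ∑ l, N j l * z l)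

lemma QMvec_pos {n m : ℕ} (B : Matrix (Fin m) (Fin n) ℝ) {x : Fin n → ℝ}
    (hx : ∀ i, 0 < x i) (j : Fin m) : 0 < QMvec B x j :=
  Finset.prod_pos fun k _ => Real.rpow_pos_of_pos (hx k) _

lemma QMvec_eq_exp {n m : ℕ} (B : Matrix (Fin m) (Fin n) ℝ) {x : Fin n → ℝ}
    (hx : ∀ i, 0 < x i) (j : Fin m) :
    QMvec B x j = Real.exp (∑ k, B j k * Real.log (x k)) := by
  rw [Real.exp_sum, QMvec]
  refine Finset.prod_congr rfl fun k _ => ?_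
  rw [Real.rpow_def_of_pos (hx k), mul_comm]

lemma QMvec_inv {n : ℕ} {C D : Matrix (Fin n) (Fin n) ℝ} (hCD : C * D = 1)
    {x : Fin n → ℝ} (hx : ∀ i, 0 < x i) : QMvec C (QMvec D x) = x := by
  funext i
  have hpos : ∀ j, 0 < QMvec D x j := QMvec_pos D hx
  rw [QMvec_eq_exp C hpos]
  have : ∀ j, Real.log (QMvec D x j) = ∑ k, D j k * Real.log (x k) := fun j => by
    rw [QMvec_eq_exp D hx, Real.log_exp]
  simp only [this, Finset.mul_sum]
  rw [Finset.sum_comm]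
  have : ∑ k, ∑ j, C i j * (D j k * Real.log (x k))
      = ∑ k, (C * D) i k * Real.log (x k) := by
    refine Finset.sum_congr rfl fun k _ => ?_
    rw [Matrix.mul_apply, Finset.sum_mul]
    exact Finset.sum_congr rfl fun j _ => by ring
  rw [this, hCD]
  simp [Matrix.one_apply, Real.exp_log (hx i)]

lemma QMvec_cont {n m : ℕ} (B : Matrix (Fin m) (Fin n) ℝ) :
    ContinuousOn (QMvec B) {x : Fin n → ℝ | ∀ i, 0 < x i} := by
  apply continuousOn_pi.2
  intro j
  refine continuousOn_finset_prod Finset.univ fun k _ => ?_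
  exact (continuous_apply k).continuousOn.rpow_const fun x hx => Or.inl (hx k).ne'

/-- For a QP mapping with `m = n` and invertible `B`, the quasimonomial map `ψ_B` is a
homeomorphism of the open positive orthant onto itself and conjugates the QP mapping to the
Lotka–Volterra mapping of coefficients `B·λ`, `B·A` (the class invariant `B·M`). -/
theorem qp_conjugate_to_LV_square {n : ℕ} (lam : Fin n → ℝ)
    (A : Matrix (Fin n) (Fin n) ℝ) (B : Matrix (Fin n) (Fin n) ℝ) (hB : IsUnit B.det) :
    Set.BijOn (QMvec B) {x : Fin n → ℝ | ∀ i, 0 < x i} {x : Fin n → ℝ | ∀ i, 0 < x i} ∧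
    ContinuousOn (QMvec B) {x : Fin n → ℝ | ∀ i, 0 < x i} ∧
    ContinuousOn (QMvec B⁻¹) {x : Fin n → ℝ | ∀ i, 0 < x i} ∧
    (∀ x ∈ {x : Fin n → ℝ | ∀ i, 0 < x i},
      QMvec B⁻¹ (QMvec B x) = x ∧ QMvec B (QMvec B⁻¹ x) = x) ∧
    (∀ x ∈ {x : Fin n → ℝ | ∀ i, 0 < x i},
      QMvec B (QPmap lam A B x) = LVmap (B.mulVec lam) (B * A) (QMvec B x)) := by
  have hinv : B⁻¹ * B = 1 := Matrix.nonsing_inv_mul B hB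
  have hinv' : B * B⁻¹ = 1 := Matrix.mul_nonsing_inv B hB
  have hmapsB : Set.MapsTo (QMvec B) {x : Fin n → ℝ | ∀ i, 0 < x i}
      {x : Fin n → ℝ | ∀ i, 0 < x i} := fun x hx => QMvec_pos B hx
  have hmapsB' : Set.MapsTo (QMvec B⁻¹) {x : Fin n → ℝ | ∀ i, 0 < x i}
      {x : Fin n → ℝ | ∀ i, 0 < x i} := fun x hx => QMvec_pos B⁻¹ hx
  refine ⟨?_, QMvec_cont B, QMvec_cont B⁻¹, ?_, ?_⟩
  · exact Set.InvOn.bijOn ⟨fun x hx => QMvec_inv hinv hx, fun x hx => QMvec_inv hinv' hx⟩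
      hmapsB hmapsB'
  · exact fun x hx => ⟨QMvec_inv hinv hx, QMvec_inv hinv' hx⟩
  · intro x hx
    funext j
    have hFpos : ∀ i, 0 < QPmap lam A B x i :=
      fun i => mul_pos (hx i) (Real.exp_pos _)
    have hlog : ∀ k, Real.log (QPmap lam A B x k)
        = Real.log (x k) + (lam k + ∑ l, A k l * QMvec B x l) := fun k => by
      rw [QPmap, Real.log_mul (hx k).ne' (Real.exp_pos _).ne', Real.log_exp]; rfl
    rw [QMvec_eq_exp B hFpos, LVmap, QMvec_eq_exp B hx, ← Real.exp_add]
    congr 1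
    simp only [hlog, mul_add, Finset.sum_add_distrib, Finset.mul_sum,
      Matrix.mulVec, Matrix.mul_apply, dotProduct, Finset.sum_mul]
    congr 1
    congr 1
    rw [Finset.sum_comm]
    exact Finset.sum_congr rfl fun l _ => Finset.sum_congr rfl fun k _ => by ring
end

section
/- Let F be a QP mapping on the open positive orthant of ℝⁿ with data (λ, A, B), m ≥ n. Define ψ_B : ℝⁿ_{>0} → ℝᵐ_{>0} by ψ_B(x)_j = Π_{k=1}^n x_k^{B_{jk}} (the vector of quasimonomials of F). Then ψ_B ∘ F = L ∘ ψ_B, where L is the m-dimensional Lotka–Volterra mapping L_j(z) = z_j · exp((B·λ)_j + Σ_{l=1}^m (B·A)_{jl} · z_l); that is, ψ_B semiconjugates F onto the Lotka–Volterra canonical form of matrix B·M, where M = (λ | A). -/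
/-- The quasimonomial map `ψ_B` semiconjugates a QP mapping (with `m ≥ n`) onto its
`m`-dimensional Lotka–Volterra canonical form of matrix `B·M`: `ψ_B ∘ F = L ∘ ψ_B`. -/
theorem qp_semiconjugate_to_LV {n m : ℕ} (hmn : n ≤ m) (lam : Fin n → ℝ)
    (A : Matrix (Fin n) (Fin m) ℝ) (B : Matrix (Fin m) (Fin n) ℝ) :
    ∀ x : Fin n → ℝ, (∀ i, 0 < x i) →
      QMvec B (QPmap lam A B x) = LVmap (B.mulVec lam) (B * A) (QMvec B x) := by
  intro x hx
  funext j
  simp only [QMvec, QPmap, LVmap, Matrix.mulVec, Matrix.mul_apply, dotProduct]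
  have h1 : ∀ k, (x k * Real.exp (lam k + ∑ j', A k j' * ∏ k', x k' ^ B j' k')) ^ B j k
      = x k ^ B j k * Real.exp (B j k * (lam k + ∑ j', A k j' * ∏ k', x k' ^ B j' k')) := by
    intro k
    rw [Real.mul_rpow (hx k).le (Real.exp_pos _).le,
      Real.rpow_def_of_pos (Real.exp_pos _), Real.log_exp]
    ring
  simp only [h1, Finset.prod_mul_distrib, ← Real.exp_sum]
  congr 1
  simp only [mul_add, Finset.sum_add_distrib, Finset.mul_sum, Finset.sum_mul, ← mul_assoc]
  rw [Finset.sum_comm]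
end

section
/- Let (λ, A, B) be the data of an n-dimensional QP mapping with m > n quasimonomials and combined matrix M = (λ | A), and let L be the m-dimensional Lotka–Volterra mapping L_j(z) = z_j · exp((B·λ)_j + Σ_{l=1}^m (B·A)_{jl} · z_l) on the open positive orthant of ℝᵐ. Then there exist m−n linearly independent vectors d⁽¹⁾, …, d⁽ᵐ⁻ⁿ⁾ ∈ ℝᵐ such that for each of them dᵀ·(B·M) = 0 and the quasimonomial function J_d(z) = Π_{j=1}^m z_j^{d_j} is a constant of motion of L: J_d(L(z)) = J_d(z) for all z in the open positive orthant of ℝᵐ. -/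
/-- For the `m`-dimensional Lotka–Volterra canonical form of an `n`-dimensional QP mapping
with `m > n` quasimonomials, there exist `m - n` linearly independent vectors `d` with
`dᵀ·(B·M) = 0`, each giving a quasimonomial constant of motion
`J_d(z) = Π_j z_j ^ d_j` of the LV mapping. -/
theorem lv_constants_of_motion {n m : ℕ} (hnm : n < m) (lam : Fin n → ℝ)
    (A : Matrix (Fin n) (Fin m) ℝ) (B : Matrix (Fin m) (Fin n) ℝ) :
    ∃ d : Fin (m - n) → (Fin m → ℝ), LinearIndependent ℝ d ∧
      ∀ l, Matrix.vecMul (d l) (B * combinedM lam A) = 0 ∧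
        ∀ z : Fin m → ℝ, (∀ j, 0 < z j) →
          (∏ j, LVmap (B.mulVec lam) (B * A) z j ^ d l j) = ∏ j, z j ^ d l j := by
  classical
  let f : (Fin m → ℝ) →ₗ[ℝ] (Fin n → ℝ) := B.vecMulLinear
  have hker : m - n ≤ Module.finrank ℝ (LinearMap.ker f) := by
    have h1 := LinearMap.finrank_range_add_finrank_ker f
    have h2 : Module.finrank ℝ (LinearMap.range f) ≤ n := by
      have := Submodule.finrank_le (LinearMap.range f)
      simpa using this
    have h3 : Module.finrank ℝ (Fin m → ℝ) = m := by simp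
    omega
  let b := Module.finBasis ℝ (LinearMap.ker f)
  refine ⟨fun l => ((b (Fin.castLE hker l) : LinearMap.ker f) : Fin m → ℝ), ?_, ?_⟩
  · exact ((b.linearIndependent.comp _ (Fin.castLE_injective hker)).map'
      (LinearMap.ker f).subtype (Submodule.ker_subtype _))
  · intro l
    set d : Fin m → ℝ := ((b (Fin.castLE hker l) : LinearMap.ker f) : Fin m → ℝ) with hd
    have hdB : Matrix.vecMul d B = 0 := (b (Fin.castLE hker l)).2
    have hdN : Matrix.vecMul d (B * A) = 0 := by
      rw [← Matrix.vecMul_vecMul, hdB, Matrix.zero_vecMul]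
    constructor
    · rw [← Matrix.vecMul_vecMul, hdB, Matrix.zero_vecMul]
    · intro z hz
      have hsum : ∑ j, d j * ((B.mulVec lam) j + ∑ l', (B * A) j l' * z l') = 0 := by
        have e1 : ∑ j, d j * (B.mulVec lam) j = 0 := by
          have : dotProduct d (B.mulVec lam) = 0 := by
            rw [Matrix.dotProduct_mulVec, hdB, zero_dotProduct]
          simpa [dotProduct] using this
        have e2 : ∑ j, d j * ∑ l', (B * A) j l' * z l' = 0 := by
          have : dotProduct d ((B * A).mulVec z) = 0 := by
            rw [Matrix.dotProduct_mulVec, hdN, zero_dotProduct]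
          simpa [dotProduct, Matrix.mulVec] using this
        simp only [mul_add, Finset.sum_add_distrib, e1, e2, add_zero]
      have step : ∀ j : Fin m, LVmap (B.mulVec lam) (B * A) z j ^ d j =
          z j ^ d j * Real.exp (d j * ((B.mulVec lam) j + ∑ l', (B * A) j l' * z l')) := by
        intro j
        rw [LVmap, Real.mul_rpow (hz j).le (Real.exp_pos _).le,
          ← Real.exp_log (Real.exp_pos ((B.mulVec lam) j + ∑ l', (B * A) j l' * z l')),
          Real.log_exp, ← Real.exp_mul, mul_comm (d j)]
      calc (∏ j, LVmap (B.mulVec lam) (B * A) z j ^ d j)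
          = ∏ j, z j ^ d j *
            Real.exp (d j * ((B.mulVec lam) j + ∑ l', (B * A) j l' * z l')) := by
            exact Finset.prod_congr rfl fun j _ => step j
        _ = (∏ j, z j ^ d j) *
            Real.exp (∑ j, d j * ((B.mulVec lam) j + ∑ l', (B * A) j l' * z l')) := by
            rw [Finset.prod_mul_distrib, Real.exp_sum]
        _ = ∏ j, z j ^ d j := by rw [hsum, Real.exp_zero, mul_one]
end

section
/- Let (λ, A, B) and (λ', A', B') be the data of two n-dimensional QP mappings, each with m quasimonomials, m ≥ n, with combined matrices M = (λ | A) and M' = (λ' | A'), and assume the mappings are non-redundant: rank(B) = rank(B') = n and rank(M) = rank(M') = n. Then there exists an invertible real n×n matrix C such that λ' = C⁻¹·λ, A' = C⁻¹·A and B' = B·C (i.e., the two QP mappings belong to the same equivalence class under quasimonomial transformations) if and only if B·M = B'·M'. -/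
open Matrix

lemma exists_right_inverse {n k : ℕ} (M : Matrix (Fin n) (Fin k) ℝ) (h : M.rank = n) :
    ∃ R : Matrix (Fin k) (Fin n) ℝ, M * R = 1 := by
  have hsurj : LinearMap.range M.mulVecLin = ⊤ := by
    apply Submodule.eq_top_of_finrank_eq
    simpa [Matrix.rank] using h
  obtain ⟨g, hg⟩ := M.mulVecLin.exists_rightInverse_of_surjective hsurj
  refine ⟨LinearMap.toMatrix' g, Matrix.toLin'.injective ?_⟩
  rw [Matrix.toLin'_mul, Matrix.toLin'_one, Matrix.toLin'_toMatrix', Matrix.toLin'_apply']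
  exact hg

lemma exists_left_inverse {k n : ℕ} (B : Matrix (Fin k) (Fin n) ℝ) (h : B.rank = n) :
    ∃ L : Matrix (Fin n) (Fin k) ℝ, L * B = 1 := by
  have hker : LinearMap.ker B.mulVecLin = ⊥ := by
    have h1 := B.mulVecLin.finrank_range_add_finrank_ker
    rw [show Module.finrank ℝ (LinearMap.range B.mulVecLin) = n from h,
      Module.finrank_fintype_fun_eq_card] at h1
    simp only [Fintype.card_fin] at h1
    exact Submodule.finrank_eq_zero.mp (by omega)
  obtain ⟨g, hg⟩ := B.mulVecLin.exists_leftInverse_of_injective hker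
  refine ⟨LinearMap.toMatrix' g, Matrix.toLin'.injective ?_⟩
  rw [Matrix.toLin'_mul, Matrix.toLin'_one, Matrix.toLin'_toMatrix', Matrix.toLin'_apply']
  exact hg

lemma combinedM_mul {n m : ℕ} (P : Matrix (Fin n) (Fin n) ℝ) (lam : Fin n → ℝ)
    (A : Matrix (Fin n) (Fin m) ℝ) :
    P * combinedM lam A = combinedM (P.mulVec lam) (P * A) := by
  ext i j
  refine Fin.cases ?_ (fun j' => ?_) j <;>
    simp [combinedM, Matrix.mul_apply, Matrix.mulVec, dotProduct]

lemma combinedM_inj {n m : ℕ} {lam lam' : Fin n → ℝ} {A A' : Matrix (Fin n) (Fin m) ℝ}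
    (h : combinedM lam A = combinedM lam' A') : lam = lam' ∧ A = A' := by
  constructor
  · funext i
    have := congrFun (congrFun h i) 0
    simpa [combinedM] using this
  · ext i j
    have := congrFun (congrFun h i) j.succ
    simpa [combinedM] using this

/-- Two non-redundant `n`-dimensional QP mappings with `m ≥ n` quasimonomials belong to the
same equivalence class under quasimonomial transformations if and only if
`B·M = B'·M'`. -/
theorem same_class_iff_BM_eq {n m : ℕ} (hmn : n ≤ m)
    (lam lam' : Fin n → ℝ) (A A' : Matrix (Fin n) (Fin m) ℝ)
    (B B' : Matrix (Fin m) (Fin n) ℝ)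
    (hB : B.rank = n) (hB' : B'.rank = n)
    (hM : (combinedM lam A).rank = n) (hM' : (combinedM lam' A').rank = n) :
    (∃ C : Matrix (Fin n) (Fin n) ℝ, IsUnit C.det ∧
      lam' = C⁻¹.mulVec lam ∧ A' = C⁻¹ * A ∧ B' = B * C) ↔
    B * combinedM lam A = B' * combinedM lam' A' := by
  constructor
  · rintro ⟨C, hC, rfl, rfl, rfl⟩
    rw [← combinedM_mul, Matrix.mul_assoc, Matrix.mul_nonsing_inv_cancel_left _ _ hC]
  · intro h
    obtain ⟨L, hL⟩ := exists_left_inverse B hB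
    obtain ⟨R, hR⟩ := exists_right_inverse _ hM
    obtain ⟨R', hR'⟩ := exists_right_inverse _ hM'
    set D := combinedM lam A * R' with hD
    have hBD : B * D = B' := by
      rw [hD, ← Matrix.mul_assoc, h, Matrix.mul_assoc, hR', Matrix.mul_one]
    have hE : D * (combinedM lam' A' * R) = 1 := by
      have h1 : B * (D * (combinedM lam' A' * R)) = B := by
        rw [← Matrix.mul_assoc, hBD, ← Matrix.mul_assoc, ← h, Matrix.mul_assoc, hR,
          Matrix.mul_one]
      have h2 := congrArg (L * ·) h1
      simpa [← Matrix.mul_assoc, hL, Matrix.one_mul] using h2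
    have hDu : IsUnit D.det := Matrix.isUnit_det_of_right_inverse hE
    have h3 : combinedM lam A = D * combinedM lam' A' := by
      have h1 : B * combinedM lam A = B * (D * combinedM lam' A') := by
        rw [← Matrix.mul_assoc, hBD, h]
      have h2 := congrArg (L * ·) h1
      simpa [← Matrix.mul_assoc, hL, Matrix.one_mul] using h2
    have hM'eq : combinedM lam' A' = D⁻¹ * combinedM lam A := by
      rw [h3, ← Matrix.mul_assoc, Matrix.nonsing_inv_mul _ hDu, Matrix.one_mul]
    rw [combinedM_mul] at hM'eq
    obtain ⟨h4, h5⟩ := combinedM_inj hM'eq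
    exact ⟨D, hDu, h4, h5, hBD.symm⟩
end

section
/- Let λ ∈ ℝⁿ, A a real n×m matrix, B a real m×n matrix, and for x in the open positive orthant of ℝⁿ set g_i(x) = λ_i + Σ_{j=1}^m A_{ij} · Π_{k=1}^n x_k^{B_{jk}}. Let F_E(x)_i = x_i + x_i·g_i(x) and F_QP(x)_i = x_i·exp(g_i(x)). If x₀ is a point of the open positive orthant with g_i(x₀) = 0 for all i (a common steady state), then the derivatives (Jacobian matrices) of F_E and F_QP at x₀ coincide; explicitly, both Jacobians have (i,k) entry δ_{ik} + x₀ᵢ·∂g_i/∂x_k(x₀). -/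
/-- The exponents `g_i(x) = λ_i + Σ_j A_{ij} · Π_k x_k ^ B_{jk}` of a QP system. -/
noncomputable def QPexponent {n m : ℕ} (lam : Fin n → ℝ) (A : Matrix (Fin n) (Fin m) ℝ)
    (B : Matrix (Fin m) (Fin n) ℝ) (x : Fin n → ℝ) : Fin n → ℝ :=
  fun i => lam i + ∑ j, A i j * ∏ k, x k ^ B j k

/-! Both discretizations have the form `x_i · φ(g_i(x))` with `φ(t) = 1 + t` or `φ(t) = exp t`.
Since `φ(0) = φ'(0) = 1`, the product rule gives the same derivative `u' + u(x₀) · g'` of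
`u · φ ∘ g` at every zero `x₀` of `g`, whichever `φ` is used. -/

section ZeroOfExponent

variable {E : Type*} [NormedAddCommGroup E] [NormedSpace ℝ E] {u g : E → ℝ}
  {u' g' : E →L[ℝ] ℝ} {x : E}

theorem HasFDerivAt.add_mul_of_eq_zero (hu : HasFDerivAt u u' x) (hg : HasFDerivAt g g' x)
    (hgx : g x = 0) : HasFDerivAt (fun y => u y + u y * g y) (u' + u x • g') x := by
  simpa [hgx] using hu.fun_add (hu.fun_mul hg)

theorem HasFDerivAt.mul_exp_of_eq_zero (hu : HasFDerivAt u u' x) (hg : HasFDerivAt g g' x)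
    (hgx : g x = 0) : HasFDerivAt (fun y => u y * Real.exp (g y)) (u' + u x • g') x := by
  simpa [hgx, add_comm] using hu.fun_mul hg.exp

end ZeroOfExponent

theorem differentiableAt_QPexponent {n m : ℕ} (lam : Fin n → ℝ) (A : Matrix (Fin n) (Fin m) ℝ)
    (B : Matrix (Fin m) (Fin n) ℝ) {x : Fin n → ℝ} (hx : ∀ k, x k ≠ 0) (i : Fin n) :
    DifferentiableAt ℝ (fun y => QPexponent lam A B y i) x := by
  unfold QPexponent
  fun_prop (disch := exact hx _)

/-- At a common steady state `x₀` (a positive point with `g(x₀) = 0`), the Jacobians of the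
Euler discretization `F_E(x)_i = x_i + x_i·g_i(x)` and of the QP discretization
`F_QP(x)_i = x_i·exp(g_i(x))` coincide; explicitly, the derivative sends a direction `v` to
the vector with `i`-th component `v_i + x₀_i · (Dg_i(x₀) v)`. -/
theorem jacobians_coincide_at_steady_state {n m : ℕ} (lam : Fin n → ℝ)
    (A : Matrix (Fin n) (Fin m) ℝ) (B : Matrix (Fin m) (Fin n) ℝ)
    (FE FQP : (Fin n → ℝ) → Fin n → ℝ)
    (hFE : FE = fun x i => x i + x i * QPexponent lam A B x i)
    (hFQP : FQP = fun x i => x i * Real.exp (QPexponent lam A B x i))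
    (x0 : Fin n → ℝ) (hx0 : ∀ i, 0 < x0 i)
    (hss : ∀ i, QPexponent lam A B x0 i = 0) :
    fderiv ℝ FE x0 = fderiv ℝ FQP x0 ∧
    (∀ v : Fin n → ℝ, fderiv ℝ FE x0 v =
      fun i => v i + x0 i * fderiv ℝ (fun x => QPexponent lam A B x i) x0 v) := by
  set Dg := fun i => fderiv ℝ (fun x => QPexponent lam A B x i) x0
  have hg i : HasFDerivAt (fun x => QPexponent lam A B x i) (Dg i) x0 :=
    (differentiableAt_QPexponent lam A B (fun k => (hx0 k).ne') i).hasFDerivAt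
  have hproj i : HasFDerivAt (fun x : Fin n → ℝ => x i)
      (ContinuousLinearMap.proj i : (Fin n → ℝ) →L[ℝ] ℝ) x0 :=
    hasFDerivAt_apply i x0
  set L := ContinuousLinearMap.pi fun i => ContinuousLinearMap.proj i + x0 i • Dg i
  have hE : HasFDerivAt FE L x0 :=
    hFE ▸ hasFDerivAt_pi.2 fun i => (hproj i).add_mul_of_eq_zero (hg i) (hss i)
  have hQP : HasFDerivAt FQP L x0 :=
    hFQP ▸ hasFDerivAt_pi.2 fun i => (hproj i).mul_exp_of_eq_zero (hg i) (hss i)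
  refine ⟨hE.fderiv.trans hQP.fderiv.symm, fun v => ?_⟩
  rw [hE.fderiv]
  rfl
end

section
/- Let λ* ∈ ℝⁿ, A* a real n×m matrix, B a real m×n matrix, ε > 0, and C an invertible real n×n matrix. Let F_ε be the QP discretization with time step ε of the QP differential system with data (λ*, A*, B) (i.e., the QP mapping with data (ελ*, εA*, B)), and let G_ε be the QP discretization with time step ε of the quasimonomially transformed differential system with data (C⁻¹·λ*, C⁻¹·A*, B·C). Then F_ε ∘ φ_C = φ_C ∘ G_ε on the open positive orthant, where φ_C(y)_i = Π_{j=1}^n y_j^{C_{ij}}; that is, the operations of quasimonomial transformation and QP discretization commute. -/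
/-- Quasimonomial transformation and QP discretization commute: the QP discretization
(time step `ε`) of the QP differential system with data `(λ*, A*, B)` composed with `φ_C`
equals `φ_C` composed with the QP discretization of the transformed differential system
with data `(C⁻¹·λ*, C⁻¹·A*, B·C)`, on the open positive orthant. -/
theorem qp_discretization_commutes_with_qm {n m : ℕ} (lam : Fin n → ℝ)
    (A : Matrix (Fin n) (Fin m) ℝ) (B : Matrix (Fin m) (Fin n) ℝ)
    (C : Matrix (Fin n) (Fin n) ℝ) (hC : IsUnit C.det) (ε : ℝ) (hε : 0 < ε)
    (y : Fin n → ℝ) (hy : ∀ i, 0 < y i) :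
    QPmap (ε • lam) (ε • A) B (QMtrans C y) =
      QMtrans C (QPmap (ε • C⁻¹.mulVec lam) (ε • (C⁻¹ * A)) (B * C) y) := by
  have hCC : C * C⁻¹ = 1 := Matrix.mul_nonsing_inv C hC
  set M : Fin m → ℝ := fun j => ∏ k, y k ^ (B * C) j k with hM
  set t : Fin n → ℝ :=
    fun j => (ε • C⁻¹.mulVec lam) j + ∑ p, (ε • (C⁻¹ * A)) j p * M p with ht
  have hmono : ∀ j : Fin m, (∏ k, (∏ l, y l ^ C k l) ^ B j k) = M j := by
    intro j
    calc (∏ k, (∏ l, y l ^ C k l) ^ B j k)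
        = ∏ k, ∏ l, y l ^ (C k l * B j k) := by
          refine Finset.prod_congr rfl fun k _ => ?_
          rw [← Real.finset_prod_rpow _ _ (fun l _ => (Real.rpow_pos_of_pos (hy l) _).le)]
          refine Finset.prod_congr rfl fun l _ => ?_
          rw [← Real.rpow_mul (hy l).le]
      _ = ∏ l, ∏ k, y l ^ (C k l * B j k) := Finset.prod_comm
      _ = M j := by
          refine Finset.prod_congr rfl fun l _ => ?_
          rw [← Real.rpow_sum_of_pos (hy l)]
          congr 1
          simp [Matrix.mul_apply, mul_comm]
  have hlam : C.mulVec (ε • C⁻¹.mulVec lam) = ε • lam := by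
    rw [Matrix.mulVec_smul, Matrix.mulVec_mulVec, hCC, Matrix.one_mulVec]
  have hA : C * (ε • (C⁻¹ * A)) = ε • A := by
    rw [Matrix.mul_smul, ← Matrix.mul_assoc, hCC, Matrix.one_mul]
  funext i
  show _ * Real.exp _ = ∏ j, (y j * Real.exp (t j)) ^ C i j
  have hRHS : (∏ j, (y j * Real.exp (t j)) ^ C i j)
      = (∏ j, y j ^ C i j) * Real.exp (∑ j, C i j * t j) := by
    rw [Real.exp_sum, ← Finset.prod_mul_distrib]
    refine Finset.prod_congr rfl fun j _ => ?_
    rw [Real.mul_rpow (hy j).le (Real.exp_pos _).le]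
    congr 1
    rw [← Real.exp_mul, mul_comm]
  rw [hRHS]
  show (∏ j, y j ^ C i j) * Real.exp ((ε • lam) i +
      ∑ j, (ε • A) i j * ∏ k, (∏ l, y l ^ C k l) ^ B j k) = _
  simp only [hmono]
  congr 2
  have h1 : ∑ j, C i j * (ε • C⁻¹.mulVec lam) j = (ε • lam) i := by
    have := congrFun hlam i
    simpa [Matrix.mulVec, dotProduct] using this
  have h2 : ∀ p : Fin m, ∑ j, C i j * (ε • (C⁻¹ * A)) j p = (ε • A) i p := by
    intro p
    have := congrFun (congrFun hA i) p
    simpa [Matrix.mul_apply] using this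
  calc (ε • lam) i + ∑ p, (ε • A) i p * M p
      = (∑ j, C i j * (ε • C⁻¹.mulVec lam) j)
        + ∑ p, (∑ j, C i j * (ε • (C⁻¹ * A)) j p) * M p := by
        rw [h1]
        exact congrArg _ (Finset.sum_congr rfl fun p _ => by rw [h2 p])
    _ = (∑ j, C i j * (ε • C⁻¹.mulVec lam) j)
        + ∑ j, ∑ p, C i j * ((ε • (C⁻¹ * A)) j p * M p) := by
        congr 1
        have key : ∀ p : Fin m, (∑ j, C i j * (ε • (C⁻¹ * A)) j p) * M p
            = ∑ j, C i j * ((ε • (C⁻¹ * A)) j p * M p) := by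
          intro p
          rw [Finset.sum_mul]
          exact Finset.sum_congr rfl fun j _ => by ring
        simp only [key]
        exact Finset.sum_comm
    _ = ∑ j, C i j * t j := by
        rw [← Finset.sum_add_distrib]
        exact Finset.sum_congr rfl fun j _ => by rw [ht, mul_add, Finset.mul_sum]
end

section
/- Let λ* ∈ ℝⁿ, A* a real n×m matrix, B a real m×n matrix with m ≥ n, and ε > 0. Let F_ε be the QP discretization with time step ε of the QP differential system with data (λ*, A*, B) (the QP mapping with data (ελ*, εA*, B)), and let L_ε be the QP discretization with time step ε of the m-dimensional Lotka–Volterra canonical form of the differential system, namely the Lotka–Volterra mapping z_j ↦ z_j·exp(ε(B·λ*)_j + Σ_{l=1}^m ε(B·A*)_{jl}·z_l). Then ψ_B ∘ F_ε = L_ε ∘ ψ_B on the open positive orthant of ℝⁿ, where ψ_B(x)_j = Π_{k=1}^n x_k^{B_{jk}}; that is, the operations of QP discretization and transformation to the Lotka–Volterra canonical form commute. -/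
/-- QP discretization and transformation to the Lotka–Volterra canonical form commute:
`ψ_B ∘ F_ε = L_ε ∘ ψ_B` on the open positive orthant, where `F_ε` is the QP discretization
(time step `ε`) of the QP system with data `(λ*, A*, B)` and `L_ε` is the QP discretization
of the LV canonical form with coefficients `ε·B·λ*` and `ε·B·A*`. -/
theorem qp_discretization_commutes_with_LV {n m : ℕ} (hmn : n ≤ m) (lam : Fin n → ℝ)
    (A : Matrix (Fin n) (Fin m) ℝ) (B : Matrix (Fin m) (Fin n) ℝ) (ε : ℝ) (hε : 0 < ε)
    (x : Fin n → ℝ) (hx : ∀ i, 0 < x i) :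
    QMvec B (QPmap (ε • lam) (ε • A) B x) =
      LVmap (ε • B.mulVec lam) (ε • (B * A)) (QMvec B x) := by
  funext j
  simp only [QMvec, QPmap, LVmap, Pi.smul_apply, Matrix.smul_apply, smul_eq_mul]
  have h1 : ∀ k : Fin n,
      (x k * Real.exp (ε * lam k + ∑ j', ε * A k j' * ∏ k', x k' ^ B j' k')) ^ B j k
        = x k ^ B j k *
          Real.exp (B j k * (ε * lam k + ∑ j', ε * A k j' * ∏ k', x k' ^ B j' k')) := by
    intro k
    rw [Real.mul_rpow (hx k).le (Real.exp_pos _).le, ← Real.exp_mul, mul_comm _ (B j k)]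
  rw [Finset.prod_congr rfl fun k _ => h1 k]
  rw [Finset.prod_mul_distrib, ← Real.exp_sum]
  congr 1
  have : ∑ k, B j k * (ε * lam k + ∑ j', ε * A k j' * ∏ k', x k' ^ B j' k')
      = ε * ∑ k, B j k * lam k
        + ∑ j', (ε * ∑ k, B j k * A k j') * ∏ k', x k' ^ B j' k' := by
    simp only [mul_add, Finset.sum_add_distrib]
    congr 1
    · rw [Finset.mul_sum]; exact Finset.sum_congr rfl fun k _ => by ring
    · simp only [Finset.mul_sum]
      rw [Finset.sum_comm]
      refine Finset.sum_congr rfl fun j' _ => ?_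
      rw [Finset.sum_mul]
      exact Finset.sum_congr rfl fun k _ => by ring
  rw [this]
  simp [Matrix.mulVec, Matrix.mul_apply, dotProduct, Finset.mul_sum]
end
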